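/- arXiv:1306.3977 — 2 statements merged into one kernel-verified Lean document; each statement's English description precedes it below -/
import Mathlib

section
/- Let A be an M×N real matrix and let x̃ ∈ ℝ^N be a vector with at most K nonzero entries, where 2K ≤ M, and suppose every set of 2K columns of A is linearly independent. Then x̃ is the unique vector with at most K nonzero entries satisfying A x = A x̃. -/
/-- If every set of at most 2K columns of A is linearly independent and
x̃ is K-sparse (2K ≤ M), then x̃ is the unique K-sparse solution of A x = A x̃. -/
theorem sparse_solution_unique (M N K : ℕ) (A : Matrix (Fin M) (Fin N) ℝ)
    (hMN : M ≤ N) (hK : 2 * K ≤ M)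
    (hind : ∀ S : Finset (Fin N), S.card ≤ 2 * K →
      LinearIndependent ℝ (fun j : S => fun i => A i (j : Fin N)))
    (xt : Fin N → ℝ) (hxt : (Finset.univ.filter fun j => xt j ≠ 0).card ≤ K) :
    ∀ x : Fin N → ℝ, (Finset.univ.filter fun j => x j ≠ 0).card ≤ K →
      A.mulVec x = A.mulVec xt → x = xt := by
  intro x hx hAx
  set d : Fin N → ℝ := fun j => x j - xt j with hd
  set S : Finset (Fin N) := (Finset.univ.filter fun j => x j ≠ 0) ∪
      (Finset.univ.filter fun j => xt j ≠ 0) with hS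
  have hScard : S.card ≤ 2 * K := by
    calc S.card ≤ _ + _ := Finset.card_union_le _ _
    _ ≤ 2 * K := by omega
  have hdS : ∀ j, j ∉ S → d j = 0 := by
    intro j hj
    simp only [hS, Finset.mem_union, Finset.mem_filter, Finset.mem_univ, true_and,
      not_or, not_not] at hj
    simp [hd, hj.1, hj.2]
  have hAd : A.mulVec d = 0 := by
    funext i
    have := congrFun hAx i
    simp only [Matrix.mulVec, dotProduct, hd] at this ⊢
    simp [mul_sub, Finset.sum_sub_distrib, this]
  have hli := Fintype.linearIndependent_iff.mp (hind S hScard) (fun j => d j)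
  have hsum : ∑ j : S, d j • (fun i => A i (j : Fin N)) = 0 := by
    funext i
    simp only [Finset.sum_apply, Pi.zero_apply, Pi.smul_apply, smul_eq_mul]
    have : ∑ j ∈ S, d j * A i j = 0 := by
      have h0 := congrFun hAd i
      simp only [Matrix.mulVec, dotProduct, Pi.zero_apply] at h0
      rw [← h0, ← Finset.sum_subset (Finset.subset_univ S)]
      · exact Finset.sum_congr rfl fun j _ => mul_comm _ _
      · intro j _ hj; rw [hdS j hj, mul_zero]
    rw [← this, ← Finset.sum_attach S fun j => d j * A i j]
    rfl
  have hzero : ∀ j ∈ S, d j = 0 := fun j hj => hli hsum ⟨j, hj⟩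
  funext j
  by_cases hj : j ∈ S
  · have := hzero j hj; simp only [hd] at this; linarith
  · have h1 := hdS j hj
    simp only [hd] at h1; linarith
end

section
/- Let A be a dm×dn real matrix, let x ∈ ℝ^{dn} be partitioned into n blocks X_i = x_{(i-1)d+1:id} of length d, with X_1 = ⋯ = X_{n-k} = 0 and X_{n-k+1},…,X_n nonzero. Suppose that for every w ∈ ℝ^{dn} with A w = 0 and w ≠ 0, writing W_i for the i-th block of w, one has −∑_{i=n-k+1}^n (X_iᵀ W_i)/‖X_i‖₂ < ∑_{i=1}^{n-k} ‖W_i‖₂. Then x is the unique minimizer of ∑_{i=1}^n ‖W_i‖₂ over all w ∈ ℝ^{dn} satisfying A w = A x. -/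
/-!
Put `v = w - x`, so `A v = 0` and `v ≠ 0`. On a block in the support of `x`, Cauchy–Schwarz
gives `‖X_i + V_i‖ ≥ ‖X_i‖ + X_iᵀ V_i / ‖X_i‖`; off the support `W_i = V_i`. Summing,
`∑ ‖W_i‖ ≥ ∑ ‖X_i‖ + (∑_{off} ‖V_i‖ + ∑_{on} X_iᵀ V_i / ‖X_i‖)`,
and the null-space condition says exactly that the bracket is positive.
-/

open Finset

/-- Euclidean norm of a block. -/
noncomputable def blockNorm {d : ℕ} (v : Fin d → ℝ) : ℝ := Real.sqrt (∑ j, v j ^ 2)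

/-- `u / ‖u‖` is a subgradient of the norm at `u`; at `u = 0` the quotient is the junk value `0`
and the inequality degenerates to `0 ≤ ‖v‖`. -/
theorem norm_add_inner_div_norm_le_norm_add {E : Type*} [NormedAddCommGroup E]
    [InnerProductSpace ℝ E] (u v : E) : ‖u‖ + inner ℝ u v / ‖u‖ ≤ ‖u + v‖ := by
  rcases eq_or_ne u 0 with rfl | hu
  · simp
  have hu : 0 < ‖u‖ := norm_pos_iff.mpr hu
  calc ‖u‖ + inner ℝ u v / ‖u‖ = inner ℝ u (u + v) / ‖u‖ := by
        rw [inner_add_right, real_inner_self_eq_norm_sq, add_div, sq,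
          mul_div_cancel_right₀ _ hu.ne']
    _ ≤ ‖u + v‖ := div_le_of_le_mul₀ hu.le (norm_nonneg _)
        (by simpa [mul_comm] using real_inner_le_norm u (u + v))

theorem blockNorm_eq_norm {d : ℕ} (v : Fin d → ℝ) : blockNorm v = ‖WithLp.toLp 2 v‖ := by
  simp [blockNorm, EuclideanSpace.norm_eq]

theorem sum_mul_eq_inner_toLp {d : ℕ} (u v : Fin d → ℝ) :
    ∑ j, u j * v j = inner ℝ (WithLp.toLp 2 u) (WithLp.toLp 2 v) := by
  simp [PiLp.inner_apply, mul_comm]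

theorem blockNorm_add_sum_mul_div_le {d : ℕ} (u v : Fin d → ℝ) :
    blockNorm u + (∑ j, u j * v j) / blockNorm u ≤ blockNorm (u + v) := by
  simpa [blockNorm_eq_norm, sum_mul_eq_inner_toLp] using
    norm_add_inner_div_norm_le_norm_add (WithLp.toLp 2 u) (WithLp.toLp 2 v)

theorem blockNorm_zero (d : ℕ) : blockNorm (0 : Fin d → ℝ) = 0 := by
  simp [blockNorm]

theorem sum_blockNorm_add_le {ι : Type*} [Fintype ι] [DecidableEq ι] {d : ℕ} (s : Finset ι)
    (x v : ι → Fin d → ℝ) (hx : ∀ i ∉ s, x i = 0) :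
    ∑ i, blockNorm (x i) + ∑ i ∈ s, (∑ j, x i j * v i j) / blockNorm (x i)
        + ∑ i ∈ sᶜ, blockNorm (v i) ≤ ∑ i, blockNorm ((x + v) i) := by
  have hx_supp : ∑ i, blockNorm (x i) = ∑ i ∈ s, blockNorm (x i) :=
    (sum_subset (subset_univ s) fun i _ hi => by rw [hx i hi, blockNorm_zero]).symm
  have hxv_split : ∑ i, blockNorm ((x + v) i)
      = ∑ i ∈ s, blockNorm (x i + v i) + ∑ i ∈ sᶜ, blockNorm (v i) := by
    rw [← sum_add_sum_compl s]
    exact congrArg _ (sum_congr rfl fun i hi => by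
      rw [Pi.add_apply, hx i (mem_compl.mp hi), zero_add])
  rw [hx_supp, hxv_split, ← sum_add_distrib]
  gcongr with i
  exact blockNorm_add_sum_mul_div_le (x i) (v i)

theorem l2l1_unique_minimizer_general (d m n k : ℕ)
    (A : Matrix (Fin (d * m)) (Fin n × Fin d) ℝ)
    (x : Fin n → Fin d → ℝ)
    (hzero : ∀ i : Fin n, (i : ℕ) < n - k → x i = 0)
    (hns : ∀ w : Fin n → Fin d → ℝ,
      A.mulVec (fun p => w p.1 p.2) = 0 → w ≠ 0 →
      -∑ i ∈ univ.filter fun i : Fin n => n - k ≤ (i : ℕ),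
          (∑ j, x i j * w i j) / blockNorm (x i)
        < ∑ i ∈ univ.filter fun i : Fin n => (i : ℕ) < n - k, blockNorm (w i)) :
    ∀ w : Fin n → Fin d → ℝ,
      A.mulVec (fun p => w p.1 p.2) = A.mulVec (fun p => x p.1 p.2) → w ≠ x →
      ∑ i, blockNorm (x i) < ∑ i, blockNorm (w i) := by
  intro w hAw hwx
  have hAv : A.mulVec (fun p => (w - x) p.1 p.2) = 0 := by
    rw [← sub_eq_zero.mpr hAw, ← Matrix.mulVec_sub]
    rfl
  have hstrict := hns (w - x) hAv (sub_ne_zero.mpr hwx)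
  have hlin := sum_blockNorm_add_le (univ.filter fun i : Fin n => n - k ≤ (i : ℕ)) x (w - x)
    fun i hi => hzero i (not_le.mp fun h => hi (mem_filter.mpr ⟨mem_univ i, h⟩))
  simp only [compl_filter, not_le, add_sub_cancel] at hlin
  linarith

/-- null-space condition implies x is the unique ℓ₂/ℓ₁ minimizer. -/
theorem l2l1_unique_minimizer (d m n k : ℕ) (hk : k ≤ n)
    (A : Matrix (Fin (d * m)) (Fin n × Fin d) ℝ)
    (x : Fin n → Fin d → ℝ)
    (hzero : ∀ i : Fin n, (i : ℕ) < n - k → x i = 0)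
    (hnonzero : ∀ i : Fin n, n - k ≤ (i : ℕ) → x i ≠ 0)
    (hns : ∀ w : Fin n → Fin d → ℝ,
      A.mulVec (fun p => w p.1 p.2) = 0 → w ≠ 0 →
      -∑ i ∈ univ.filter fun i : Fin n => n - k ≤ (i : ℕ),
          (∑ j, x i j * w i j) / blockNorm (x i)
        < ∑ i ∈ univ.filter fun i : Fin n => (i : ℕ) < n - k, blockNorm (w i)) :
    ∀ w : Fin n → Fin d → ℝ,
      A.mulVec (fun p => w p.1 p.2) = A.mulVec (fun p => x p.1 p.2) → w ≠ x →
      ∑ i, blockNorm (x i) < ∑ i, blockNorm (w i) :=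
  l2l1_unique_minimizer_general d m n k A x hzero hns
end
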